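/- arXiv:2505.13038 — 2 statements merged into one kernel-verified Lean document; each statement's English description precedes it below -/
import Mathlib

section
/- For the cutoff kernel k^N defined by k^N(x) = C_d x/|x|^d for |x| ≥ N^{-δ} and k^N(x) = C_d x N^{dδ} for |x| < N^{-δ}, and for any ξ ∈ ℝ^d with |ξ| < 2N^{-δ}, the difference satisfies |k^N(x) - k^N(x+ξ)| ≤ ℓ^N(x)|ξ|, where ℓ^N(x) = C(d)/|x|^d if |x| ≥ N^{-δ} and ℓ^N(x) = C(d)N^{dδ} if |x| < N^{-δ}, for some constant C(d) depending only on d. -/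
open MeasureTheory Real Set

noncomputable section

/-- The Coulomb kernel `k(x) = C_d x / |x|^d`. -/
def coulomb (d : ℕ) (Cd : ℝ) (x : EuclideanSpace ℝ (Fin d)) : EuclideanSpace ℝ (Fin d) :=
  (Cd / ‖x‖ ^ d) • x

/-- The cutoff kernel `k^N`. -/
def cutoffKernel (d N : ℕ) (δ Cd : ℝ) (x : EuclideanSpace ℝ (Fin d)) :
    EuclideanSpace ℝ (Fin d) :=
  if (N : ℝ) ^ (-δ) ≤ ‖x‖ then coulomb d Cd x else (Cd * (N : ℝ) ^ ((d : ℝ) * δ)) • x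

/-- The function `ℓ^N` with constant `C`. -/
def ellN (d N : ℕ) (δ C : ℝ) (x : EuclideanSpace ℝ (Fin d)) : ℝ :=
  if (N : ℝ) ^ (-δ) ≤ ‖x‖ then C / ‖x‖ ^ d else C * (N : ℝ) ^ ((d : ℝ) * δ)

/-
Both branches of `k^N` are one formula, `k^N(x) = C_d ρ(x)^{-d} x` with `ρ(x) = max(|x|, N^{-δ})`.
Since `ρ` is 1-Lipschitz, `|x| ≤ ρ(x)` and `ρ ≥ m`, the map `x ↦ ρ(x)^{-d} x` is `(d+1)/m^d`-Lipschitz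
on `{ρ ≥ m}`. For `|ξ| < 2N^{-δ}` one has `ρ(x) ≤ ρ(x+ξ) + 2N^{-δ} ≤ 3ρ(x+ξ)`, so `m = ρ(x)/3` works,
giving `C(d) = C_d (d+1) 3^d`.
-/

lemma norm_inv_pow_smul_sub_inv_pow_smul_le {E : Type*} [NormedAddCommGroup E] [NormedSpace ℝ E]
    (d : ℕ) {x y : E} {s t m : ℝ} (hm : 0 < m) (hms : m ≤ s) (hmt : m ≤ t) (hyt : ‖y‖ ≤ t)
    (hst : |s - t| ≤ ‖x - y‖) :
    ‖(s ^ d)⁻¹ • x - (t ^ d)⁻¹ • y‖ ≤ (d + 1) / m ^ d * ‖x - y‖ := by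
  have hs : 0 < s := hm.trans_le hms
  have ht : 0 < t := hm.trans_le hmt
  have hsplit : (s ^ d)⁻¹ • x - (t ^ d)⁻¹ • y
      = (s⁻¹ ^ d) • (x - y) + (s⁻¹ ^ d - t⁻¹ ^ d) • y := by
    rw [inv_pow, inv_pow]; module
  have hinv_le : max |s⁻¹| |t⁻¹| ≤ m⁻¹ := by
    rw [abs_of_pos (inv_pos.2 hs), abs_of_pos (inv_pos.2 ht)]
    exact max_le (inv_anti₀ hm hms) (inv_anti₀ hm hmt)
  have hinv_sub : |s⁻¹ - t⁻¹| * t ≤ m⁻¹ * ‖x - y‖ := by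
    rw [inv_sub_inv hs.ne' ht.ne', abs_div, abs_sub_comm, abs_of_pos (mul_pos hs ht),
      div_mul_eq_mul_div, mul_div_mul_right _ _ ht.ne', div_eq_inv_mul]
    gcongr
  have hfirst : ‖(s⁻¹ ^ d) • (x - y)‖ ≤ 1 / m ^ d * ‖x - y‖ := by
    rw [norm_smul, norm_pow, Real.norm_eq_abs, abs_of_pos (inv_pos.2 hs), one_div, ← inv_pow]
    gcongr
  have hsecond : ‖(s⁻¹ ^ d - t⁻¹ ^ d) • y‖ ≤ d / m ^ d * ‖x - y‖ := by
    rw [norm_smul, Real.norm_eq_abs]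
    calc |s⁻¹ ^ d - t⁻¹ ^ d| * ‖y‖
        ≤ |s⁻¹ - t⁻¹| * d * max |s⁻¹| |t⁻¹| ^ (d - 1) * t := by
          gcongr
          exact abs_pow_sub_pow_le (a := s⁻¹) (b := t⁻¹) (n := d)
      _ ≤ m⁻¹ * ‖x - y‖ * d * m⁻¹ ^ (d - 1) := by
          rw [mul_right_comm _ _ t, mul_right_comm _ _ t]
          gcongr
      _ = d / m ^ d * ‖x - y‖ := by
          rcases d with _ | d
          · simp
          · rw [Nat.add_sub_cancel, div_eq_mul_inv, ← inv_pow, pow_succ]; ring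
  calc ‖(s ^ d)⁻¹ • x - (t ^ d)⁻¹ • y‖
      ≤ 1 / m ^ d * ‖x - y‖ + d / m ^ d * ‖x - y‖ := by
        rw [hsplit]; exact (norm_add_le _ _).trans (add_le_add hfirst hsecond)
    _ = (d + 1) / m ^ d * ‖x - y‖ := by ring

lemma norm_inv_max_pow_smul_sub_le {E : Type*} [NormedAddCommGroup E] [NormedSpace ℝ E]
    (d : ℕ) {r : ℝ} (hr : 0 < r) {x y : E} (hxy : ‖x - y‖ ≤ 2 * r) :
    ‖(max ‖x‖ r ^ d)⁻¹ • x - (max ‖y‖ r ^ d)⁻¹ • y‖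
      ≤ (d + 1) * 3 ^ d / max ‖x‖ r ^ d * ‖x - y‖ := by
  have hρ : |max ‖x‖ r - max ‖y‖ r| ≤ ‖x - y‖ :=
    (abs_max_sub_max_le_abs _ _ _).trans (abs_norm_sub_norm_le x y)
  have hρx : 0 < max ‖x‖ r := lt_max_of_lt_right hr
  have hρy : max ‖x‖ r / 3 ≤ max ‖y‖ r := by
    have := le_max_right ‖y‖ r
    linarith [le_abs_self (max ‖x‖ r - max ‖y‖ r)]
  calc _ ≤ (d + 1) / (max ‖x‖ r / 3) ^ d * ‖x - y‖ :=
        norm_inv_pow_smul_sub_inv_pow_smul_le d (by positivity) (by linarith) hρy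
          (le_max_left _ _) hρ
    _ = (d + 1) * 3 ^ d / max ‖x‖ r ^ d * ‖x - y‖ := by
        rw [div_pow]; field_simp

lemma rpow_natCast_mul_eq_inv_rpow_neg_pow {a : ℝ} (ha : 0 ≤ a) (d : ℕ) (δ : ℝ) :
    a ^ ((d : ℝ) * δ) = ((a ^ (-δ)) ^ d)⁻¹ := by
  rw [← Real.rpow_natCast, ← Real.rpow_mul ha, ← Real.rpow_neg ha]
  ring_nf

lemma cutoffKernel_eq_smul (d N : ℕ) (δ Cd : ℝ) (x : EuclideanSpace ℝ (Fin d)) :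
    cutoffKernel d N δ Cd x = Cd • (max ‖x‖ ((N : ℝ) ^ (-δ)) ^ d)⁻¹ • x := by
  rw [cutoffKernel, coulomb, smul_smul, rpow_natCast_mul_eq_inv_rpow_neg_pow (Nat.cast_nonneg N)]
  split_ifs with h
  · rw [max_eq_left h, div_eq_mul_inv]
  · rw [max_eq_right (not_le.1 h).le]

lemma ellN_eq_div (d N : ℕ) (δ C : ℝ) (x : EuclideanSpace ℝ (Fin d)) :
    ellN d N δ C x = C / max ‖x‖ ((N : ℝ) ^ (-δ)) ^ d := by
  rw [ellN, rpow_natCast_mul_eq_inv_rpow_neg_pow (Nat.cast_nonneg N)]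
  split_ifs with h
  · rw [max_eq_left h]
  · rw [max_eq_right (not_le.1 h).le, div_eq_mul_inv]

theorem kernel_difference_bound_general (d : ℕ) (δ Cd : ℝ) (hCd : 0 < Cd) :
    ∃ C > 0, ∀ N : ℕ, 2 ≤ N → ∀ x ξ : EuclideanSpace ℝ (Fin d),
      ‖ξ‖ < 2 * (N : ℝ) ^ (-δ) →
      ‖cutoffKernel d N δ Cd x - cutoffKernel d N δ Cd (x + ξ)‖ ≤ ellN d N δ C x * ‖ξ‖ := by
  refine ⟨Cd * ((d + 1) * 3 ^ d), by positivity, fun N hN x ξ hξ => ?_⟩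
  have hr : 0 < (N : ℝ) ^ (-δ) := Real.rpow_pos_of_pos (by positivity) _
  have hxξ : ‖x - (x + ξ)‖ = ‖ξ‖ := by rw [sub_add_cancel_left, norm_neg]
  have hlip := norm_inv_max_pow_smul_sub_le d hr (x := x) (y := x + ξ) (hxξ.trans_lt hξ).le
  rw [cutoffKernel_eq_smul, cutoffKernel_eq_smul, ellN_eq_div, ← smul_sub,
    norm_smul, Real.norm_eq_abs, abs_of_pos hCd, mul_div_assoc, mul_assoc, ← hxξ]
  gcongr

theorem kernel_difference_bound (d : ℕ) (hd : 2 ≤ d) (δ Cd : ℝ) (hδ : 0 < δ) (hCd : 0 < Cd) :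
    ∃ C > 0, ∀ N : ℕ, 2 ≤ N → ∀ x ξ : EuclideanSpace ℝ (Fin d),
      ‖ξ‖ < 2 * (N : ℝ) ^ (-δ) →
      ‖cutoffKernel d N δ Cd x - cutoffKernel d N δ Cd (x + ξ)‖ ≤ ellN d N δ C x * ‖ξ‖ :=
  kernel_difference_bound_general d δ Cd hCd
end
end

section
/- (Csiszár–Kullback–Pinsker inequality) For any two probability densities μ, ν on a measure space, ‖μ - ν‖_{L^1}² ≤ 2 ∫ μ log(μ/ν). -/
/-!
With `x = P / Q`, the difference `(2x + 4) klFun x - 3 (x - 1)²` is convex on `[0, ∞)` (its second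
derivative is `4 (log x + 1/x - 1) ≥ 0`) and critical at `x = 1`, hence nonnegative. Scaled by `Q²`
this reads `(P - Q)² ≤ (2P + 4Q)/3 · Q klFun (P/Q)`, where `Q klFun (P/Q) = P log (P/Q) + Q - P`
integrates to the relative entropy. Cauchy–Schwarz then gives
`(∫ |p - q|)² ≤ (∫ (2p + 4q)/3) · ∫ p log (p/q) = 2 ∫ p log (p/q)`.
-/

open MeasureTheory Real

open Set InformationTheory

lemma hasDerivAt_mul_klFun_sub_sq {x : ℝ} (hx : 0 < x) :
    HasDerivAt (fun x : ℝ => (2 * x + 4) * klFun x - 3 * (x - 1) ^ 2)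
      (2 * klFun x + (2 * x + 4) * log x - 6 * (x - 1)) x :=
  (((((hasDerivAt_id' x).const_mul 2).add_const 4).mul (hasDerivAt_klFun hx.ne')).sub
    ((((hasDerivAt_id' x).sub_const 1).pow 2).const_mul 3)).congr_deriv (by ring)

lemma convexOn_mul_klFun_sub_sq :
    ConvexOn ℝ (Ici 0) fun x : ℝ => (2 * x + 4) * klFun x - 3 * (x - 1) ^ 2 := by
  have hf'' {x : ℝ} (hx : 0 < x) :
      HasDerivAt (fun x : ℝ => 2 * klFun x + (2 * x + 4) * log x - 6 * (x - 1))
        (2 * log x + (2 * log x + (2 * x + 4) * x⁻¹) - 6) x :=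
    ((((hasDerivAt_klFun hx.ne').const_mul 2).add
      ((((hasDerivAt_id' x).const_mul 2).add_const 4).mul (hasDerivAt_log hx.ne'))).sub
      (((hasDerivAt_id' x).sub_const 1).const_mul 6)).congr_deriv (by ring)
  refine convexOn_of_hasDerivWithinAt2_nonneg (convex_Ici 0) (by fun_prop)
    (fun x hx => (hasDerivAt_mul_klFun_sub_sq ?_).hasDerivWithinAt)
    (fun x hx => (hf'' ?_).hasDerivWithinAt) fun x hx => ?_
  all_goals rw [interior_Ici, mem_Ioi] at hx
  · exact hx
  · exact hx
  · have h := one_sub_inv_le_log_of_pos hx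
    have : (2 * x + 4) * x⁻¹ = 2 + 4 * x⁻¹ := by field_simp
    linarith

lemma three_mul_sub_one_sq_le_mul_klFun {x : ℝ} (hx : 0 ≤ x) :
    3 * (x - 1) ^ 2 ≤ (2 * x + 4) * klFun x := by
  have hmin : IsMinOn (fun x : ℝ => (2 * x + 4) * klFun x - 3 * (x - 1) ^ 2) (Ici 0) 1 :=
    convexOn_mul_klFun_sub_sq.isMinOn_of_rightDeriv_eq_zero (by simp) <|
      ((hasDerivAt_mul_klFun_sub_sq one_pos).hasDerivWithinAt.derivWithin
        (uniqueDiffWithinAt_Ioi 1)).trans (by simp [klFun_one])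
  have := hmin (mem_Ici.2 hx)
  norm_num [klFun_one] at this
  linarith

lemma mul_klFun_div {P Q : ℝ} (hPQ : Q = 0 → P = 0) :
    Q * klFun (P / Q) = P * log (P / Q) + Q - P := by
  rcases eq_or_ne Q 0 with rfl | hQ
  · simp [hPQ rfl]
  · rw [klFun_apply]
    field_simp

lemma sq_sub_le_mul_mul_klFun_div {P Q : ℝ} (hP : 0 ≤ P) (hQ : 0 ≤ Q) (hPQ : Q = 0 → P = 0) :
    (P - Q) ^ 2 ≤ (2 * P + 4 * Q) / 3 * (Q * klFun (P / Q)) := by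
  rcases hQ.eq_or_lt with rfl | hQ
  · simp [hPQ rfl]
  obtain ⟨x, hx, rfl⟩ : ∃ x, 0 ≤ x ∧ P = x * Q := ⟨P / Q, by positivity, by field_simp⟩
  calc (x * Q - Q) ^ 2 = Q ^ 2 * (3 * (x - 1) ^ 2) / 3 := by ring
    _ ≤ Q ^ 2 * ((2 * x + 4) * klFun x) / 3 := by
      gcongr Q ^ 2 * ?_ / 3; exact three_mul_sub_one_sq_le_mul_klFun hx
    _ = (2 * (x * Q) + 4 * Q) / 3 * (Q * klFun (x * Q / Q)) := by
      rw [mul_div_cancel_right₀ x hQ.ne']; ring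

lemma sq_integral_le_integral_mul_integral_of_sq_le {α : Type*} [MeasurableSpace α]
    {μ : Measure α} {u w v : α → ℝ} (hu : Integrable u μ) (hw : Integrable w μ)
    (hv : Integrable v μ) (hw0 : 0 ≤ᵐ[μ] w) (hv0 : 0 ≤ᵐ[μ] v)
    (huwv : ∀ᵐ a ∂μ, u a ^ 2 ≤ w a * v a) :
    (∫ a, u a ∂μ) ^ 2 ≤ (∫ a, w a ∂μ) * ∫ a, v a ∂μ := by
  have hsqrt {f : α → ℝ} (hf : Integrable f μ) (hf0 : 0 ≤ᵐ[μ] f) :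
      MemLp (fun a => √(f a)) 2 μ ∧ ∫ a, √(f a) ^ (2 : ℝ) ∂μ = ∫ a, f a ∂μ := by
    have hsq : (fun a => √(f a) ^ 2) =ᵐ[μ] f := hf0.mono fun a ha => sq_sqrt ha
    refine ⟨?_, integral_congr_ae <| hsq.mono fun a ha => by simpa using ha⟩
    rw [memLp_two_iff_integrable_sq
      (continuous_sqrt.comp_aestronglyMeasurable hf.aestronglyMeasurable)]
    exact hf.congr hsq.symm
  obtain ⟨hw2, hw_int⟩ := hsqrt hw hw0
  obtain ⟨hv2, hv_int⟩ := hsqrt hv hv0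
  have habs : ∀ᵐ a ∂μ, |u a| ≤ √(w a) * √(v a) := by
    filter_upwards [huwv, hw0] with a ha hwa
    rw [← sqrt_mul hwa]
    exact abs_le_sqrt ha
  have hholder := integral_mul_le_Lp_mul_Lq_of_nonneg Real.HolderConjugate.two_two
    (ae_of_all _ fun a => sqrt_nonneg (w a)) (ae_of_all _ fun a => sqrt_nonneg (v a))
    (by rwa [ENNReal.ofReal_ofNat]) (by rwa [ENNReal.ofReal_ofNat])
  rw [hw_int, hv_int, ← sqrt_eq_rpow, ← sqrt_eq_rpow] at hholder
  have hle : |∫ a, u a ∂μ| ≤ √(∫ a, w a ∂μ) * √(∫ a, v a ∂μ) :=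
    calc |∫ a, u a ∂μ| ≤ ∫ a, |u a| ∂μ := abs_integral_le_integral_abs
      _ ≤ ∫ a, √(w a) * √(v a) ∂μ := integral_mono_ae hu.abs (hw2.integrable_mul hv2) habs
      _ ≤ _ := hholder
  calc (∫ a, u a ∂μ) ^ 2 = |∫ a, u a ∂μ| ^ 2 := (sq_abs _).symm
    _ ≤ (√(∫ a, w a ∂μ) * √(∫ a, v a ∂μ)) ^ 2 := pow_le_pow_left₀ (abs_nonneg _) hle 2
    _ = (∫ a, w a ∂μ) * ∫ a, v a ∂μ := by
      rw [mul_pow, sq_sqrt (integral_nonneg_of_ae hw0), sq_sqrt (integral_nonneg_of_ae hv0)]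

theorem csiszar_kullback_pinsker {α : Type*} [MeasurableSpace α] (μ : Measure α)
    (p q : α → ℝ) (hp0 : ∀ a, 0 ≤ p a) (hq0 : ∀ a, 0 ≤ q a)
    (hpint : Integrable p μ) (hqint : Integrable q μ)
    (hp1 : ∫ a, p a ∂μ = 1) (hq1 : ∫ a, q a ∂μ = 1)
    (hac : ∀ᵐ a ∂μ, q a = 0 → p a = 0)
    (hent : Integrable (fun a => p a * Real.log (p a / q a)) μ) :
    (∫ a, |p a - q a| ∂μ) ^ 2 ≤ 2 * ∫ a, p a * Real.log (p a / q a) ∂μ := by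
  have hkl : (fun a => q a * klFun (p a / q a)) =ᵐ[μ] fun a => p a * log (p a / q a) + q a - p a :=
    hac.mono fun a => mul_klFun_div
  have hsum : Integrable (fun a => p a * log (p a / q a) + q a) μ := hent.add hqint
  have hkl_int : Integrable (fun a => q a * klFun (p a / q a)) μ :=
    (hsum.sub hpint).congr hkl.symm
  have hweight : Integrable (fun a => (2 * p a + 4 * q a) / 3) μ :=
    ((hpint.const_mul 2).add (hqint.const_mul 4)).div_const 3
  calc (∫ a, |p a - q a| ∂μ) ^ 2
      ≤ (∫ a, (2 * p a + 4 * q a) / 3 ∂μ) * ∫ a, q a * klFun (p a / q a) ∂μ := by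
        refine sq_integral_le_integral_mul_integral_of_sq_le (hpint.sub hqint).abs hweight hkl_int
          (ae_of_all _ fun a => by dsimp; linarith [hp0 a, hq0 a])
          (ae_of_all _ fun a => mul_nonneg (hq0 a) (klFun_nonneg (div_nonneg (hp0 a) (hq0 a))))
          (hac.mono fun a ha => ?_)
        rw [sq_abs]
        exact sq_sub_le_mul_mul_klFun_div (hp0 a) (hq0 a) ha
    _ = 2 * ∫ a, p a * log (p a / q a) ∂μ := by
      rw [integral_congr_ae hkl, integral_sub hsum hpint, integral_add hent hqint,
        integral_div, integral_add (hpint.const_mul 2) (hqint.const_mul 4), integral_const_mul,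
        integral_const_mul, hp1, hq1]
      ring
end
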